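/- Let i ≠ j^{(1)} be elements of S and let x ∈ ℝ^{n+1} satisfy l_{v,i}(x) = l_{v,j^{(1)}}(x) > l_{v,k}(x) for all k ∈ S ∖ {i, j^{(1)}} (i.e., x lies in the open face 𝔉(i, j^{(1)})). Let b ∈ (ℂ∖{0})^{n+1} satisfy b^i + b^{j^{(1)}} = 0, and let α be an index with i_α ≠ j^{(1)}_α. Then along the ray z(t): lim_{t→+∞} t^{−F_v(x)} · z(t)_α · ∂f_t/∂z_α(z(t)) = (j^{(1)}_α − i_α) · b^{j^{(1)}}, and this limit is nonzero. -/

import Mathlib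

/-
Along the ray `z(t)_β = t^{x_β} b_β`, each monomial `z^j` equals `t^{⟨j, x⟩} b^j`, and the
logarithmic derivative `z_α ∂/∂z_α` multiplies it by `j_α`. Hence
`t^{-F_v(x)} z_α ∂f_t/∂z_α(z(t)) = Σ_j t^{l_{v,j}(x) - F_v(x)} j_α b^j`. Every exponent is `≤ 0`,
with equality exactly for `j ∈ {i, j¹}` because `x` lies in the open face `𝔉(i, j¹)`, so the sum
tends to `i_α b^i + j¹_α b^{j¹} = (j¹_α - i_α) b^{j¹}`, using `b^i = -b^{j¹}`.
-/

open Filter Topology Finset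

section LaurentMonomial

variable {ι : Type*} [Fintype ι]

theorem prod_update_zpow [DecidableEq ι] (z : ι → ℂ) (j : ι → ℤ) (α : ι) (w : ℂ) :
    ∏ β, Function.update z α w β ^ j β = w ^ j α * ∏ β ∈ univ.erase α, z β ^ j β := by
  rw [← mul_prod_erase univ _ (mem_univ α), Function.update_self]
  congr 1
  exact prod_congr rfl fun β hβ => by rw [Function.update_of_ne (ne_of_mem_erase hβ)]

theorem hasDerivAt_prod_update_zpow [DecidableEq ι] (z : ι → ℂ) (j : ι → ℤ) (α : ι)
    (hz : z α ≠ 0) :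
    HasDerivAt (fun w => ∏ β, Function.update z α w β ^ j β)
      (j α * (∏ β, z β ^ j β) / z α) (z α) := by
  simp_rw [prod_update_zpow z j α]
  refine ((hasDerivAt_zpow (j α) (z α) (Or.inl hz)).mul_const _).congr_deriv ?_
  rw [← mul_prod_erase univ (fun β => z β ^ j β) (mem_univ α), zpow_sub_one₀ hz]
  ring

theorem mul_deriv_sum_prod_update_zpow [DecidableEq ι] (S : Finset (ι → ℤ)) (c : (ι → ℤ) → ℂ)
    (z : ι → ℂ) (α : ι) (hz : z α ≠ 0) :
    z α * deriv (fun w => ∑ j ∈ S, c j * ∏ β, Function.update z α w β ^ j β) (z α) =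
      ∑ j ∈ S, c j * (j α * ∏ β, z β ^ j β) := by
  rw [(HasDerivAt.fun_sum fun j _ =>
    (hasDerivAt_prod_update_zpow z j α hz).const_mul (c j)).deriv, mul_sum]
  refine sum_congr rfl fun j _ => ?_
  field_simp

theorem prod_ofReal_rpow_mul_zpow {t : ℝ} (ht : 0 < t) (x : ι → ℝ) (b : ι → ℂ) (j : ι → ℤ) :
    ∏ β, (((t ^ x β : ℝ) : ℂ) * b β) ^ j β =
      ((t ^ ∑ β, (j β : ℝ) * x β : ℝ) : ℂ) * ∏ β, b β ^ j β := by
  simp_rw [mul_zpow, prod_mul_distrib, ← Complex.ofReal_zpow, ← Real.rpow_intCast,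
    ← Real.rpow_mul ht.le, ← Complex.ofReal_prod, ← Real.rpow_sum_of_pos ht, mul_comm]

end LaurentMonomial

section ArgmaxPair

variable {κ : Type*}

/-- For `g = l_{v,·}(x)` this says that `x` lies in the open face `𝔉(i, j)`. -/
def IsArgmaxPair (S : Finset κ) (g : κ → ℝ) (i j : κ) : Prop :=
  g i = g j ∧ ∀ k ∈ S, k ≠ i → k ≠ j → g k < g i

variable {S : Finset κ} {g : κ → ℝ} {i j : κ}

theorem IsArgmaxPair.le (h : IsArgmaxPair S g i j) (k : κ) (hk : k ∈ S) : g k ≤ g i := by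
  by_cases hki : k = i
  · rw [hki]
  by_cases hkj : k = j
  · rw [hkj, h.1]
  exact (h.2 k hk hki hkj).le

theorem IsArgmaxPair.filter_eq [DecidableEq κ] (h : IsArgmaxPair S g i j) (hi : i ∈ S)
    (hj : j ∈ S) : {k ∈ S | g k = g i} = {i, j} := by
  ext k
  simp only [mem_filter, mem_insert, mem_singleton]
  constructor
  · rintro ⟨hk, hgk⟩
    by_contra! hne
    exact (h.2 k hk hne.1 hne.2).ne hgk
  · rintro (rfl | rfl)
    · exact ⟨hi, rfl⟩
    · exact ⟨hj, h.1.symm⟩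

end ArgmaxPair

theorem tendsto_ofReal_rpow_atTop_of_neg {e : ℝ} (he : e < 0) :
    Tendsto (fun t : ℝ => ((t ^ e : ℝ) : ℂ)) atTop (𝓝 0) := by
  simpa [Function.comp_def] using (Complex.continuous_ofReal.tendsto 0).comp
    (tendsto_rpow_neg_atTop (neg_pos.mpr he))

theorem tendsto_sum_ofReal_rpow_sub_mul {κ : Type*} (S : Finset κ) (e : κ → ℝ) (m : ℝ)
    (a : κ → ℂ) (he : ∀ k ∈ S, e k ≤ m) :
    Tendsto (fun t : ℝ => ∑ k ∈ S, ((t ^ (e k - m) : ℝ) : ℂ) * a k) atTop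
      (𝓝 (∑ k ∈ S with e k = m, a k)) := by
  classical
  rw [sum_filter]
  refine tendsto_finsetSum S fun k hk => ?_
  split_ifs with hkm
  · simp [hkm]
  · simpa using (tendsto_ofReal_rpow_atTop_of_neg
      (sub_neg.mpr ((he k hk).lt_of_ne hkm))).mul_const (a k)

theorem face_log_derivative_limit_general (n : ℕ)
    (S : Finset (Fin (n + 1) → ℤ)) (hS : S.Nonempty)
    (v : (Fin (n + 1) → ℤ) → ℝ)
    (l : (Fin (n + 1) → ℤ) → (Fin (n + 1) → ℝ) → ℝ)
    (hl : ∀ j x, l j x = ∑ α, (j α : ℝ) * x α - v j)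
    (F : (Fin (n + 1) → ℝ) → ℝ)
    (hF : ∀ x, F x = S.sup' hS (fun j => l j x))
    (f : ℝ → (Fin (n + 1) → ℂ) → ℂ)
    (hf : ∀ t z, f t z = ∑ j ∈ S, ((t ^ (-(v j)) : ℝ) : ℂ) * ∏ α, z α ^ (j α))
    (pd : ℝ → Fin (n + 1) → (Fin (n + 1) → ℂ) → ℂ)
    (hpd : ∀ t α z, pd t α z = deriv (fun w => f t (Function.update z α w)) (z α))
    (i j₁ : Fin (n + 1) → ℤ) (hi : i ∈ S) (hj₁ : j₁ ∈ S) (hij : i ≠ j₁)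
    (x : Fin (n + 1) → ℝ)
    (hface : l i x = l j₁ x ∧ ∀ k ∈ S, k ≠ i → k ≠ j₁ → l k x < l i x)
    (b : Fin (n + 1) → ℂ) (hb : ∀ α, b α ≠ 0)
    (hbsum : (∏ β, b β ^ (i β)) + (∏ β, b β ^ (j₁ β)) = 0)
    (α : Fin (n + 1)) (hα : i α ≠ j₁ α)
    (zr : ℝ → Fin (n + 1) → ℂ)
    (hz : ∀ t β, zr t β = ((t ^ (x β) : ℝ) : ℂ) * b β) :
    Tendsto (fun t : ℝ => ((t ^ (-(F x)) : ℝ) : ℂ) * (zr t α * pd t α (zr t))) atTop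
      (nhds (((j₁ α - i α : ℤ) : ℂ) * ∏ β, b β ^ (j₁ β))) ∧
    ((j₁ α - i α : ℤ) : ℂ) * (∏ β, b β ^ (j₁ β)) ≠ 0 := by
  have hmax : IsArgmaxPair S (fun k => l k x) i j₁ := hface
  have hle := hmax.le
  have hFx : F x = l i x := by
    rw [hF]
    exact le_antisymm (sup'_le hS _ hle) (le_sup' (fun k => l k x) hi)
  have hray : ∀ t > (0 : ℝ),
      ((t ^ (-(F x)) : ℝ) : ℂ) * (zr t α * pd t α (zr t)) =
        ∑ k ∈ S, ((t ^ (l k x - l i x) : ℝ) : ℂ) * (k α * ∏ β, b β ^ k β) := by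
    intro t ht
    have hzr : zr t = fun β => ((t ^ x β : ℝ) : ℂ) * b β := funext (hz t)
    have hzα : zr t α ≠ 0 := by
      rw [hz]
      exact mul_ne_zero (Complex.ofReal_ne_zero.mpr (Real.rpow_pos_of_pos ht _).ne') (hb α)
    simp_rw [hpd, hf, mul_deriv_sum_prod_update_zpow S _ _ α hzα, hzr,
      prod_ofReal_rpow_mul_zpow ht, mul_sum, hFx]
    refine sum_congr rfl fun k _ => ?_
    rw [show l k x - l i x = -l i x + -v k + ∑ β, (k β : ℝ) * x β by rw [hl k x]; ring,
      Real.rpow_add ht, Real.rpow_add ht]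
    push_cast
    ring
  have hbi : ∏ β, b β ^ i β = -∏ β, b β ^ j₁ β := eq_neg_of_add_eq_zero_left hbsum
  have hlimit : ∑ k ∈ S with l k x = l i x, (k α * ∏ β, b β ^ k β) =
      ((j₁ α - i α : ℤ) : ℂ) * ∏ β, b β ^ j₁ β := by
    rw [hmax.filter_eq hi hj₁, sum_pair hij, hbi]
    push_cast
    ring
  refine ⟨?_, mul_ne_zero ?_ (prod_ne_zero_iff.mpr fun β _ => zpow_ne_zero _ (hb β))⟩
  · rw [← hlimit]
    refine (tendsto_sum_ofReal_rpow_sub_mul S (fun k => l k x) _ _ hle).congr' ?_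
    filter_upwards [eventually_gt_atTop 0] with t ht
    exact (hray t ht).symm
  · exact Int.cast_ne_zero.mpr (sub_ne_zero.mpr hα.symm)

/-- If `x` lies in the open face `𝔉(i, j¹)` (i.e. `l_{v,i}(x) = l_{v,j¹}(x) >
l_{v,k}(x)` for all other `k ∈ S`), `b ∈ (ℂ∖{0})^{n+1}` satisfies `b^i + b^{j¹} = 0`, and `α`
is an index with `i_α ≠ j¹_α`, then along the ray `z(t)_α = t^{x_α} b_α` one has
`t^{-F_v(x)} z(t)_α ∂f_t/∂z_α(z(t)) → (j¹_α - i_α) b^{j¹} ≠ 0`. -/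
theorem face_log_derivative_limit (n : ℕ) (hn : 1 ≤ n)
    (S : Finset (Fin (n + 1) → ℤ)) (hS : S.Nonempty)
    (v : (Fin (n + 1) → ℤ) → ℝ)
    (l : (Fin (n + 1) → ℤ) → (Fin (n + 1) → ℝ) → ℝ)
    (hl : ∀ j x, l j x = ∑ α, (j α : ℝ) * x α - v j)
    (F : (Fin (n + 1) → ℝ) → ℝ)
    (hF : ∀ x, F x = S.sup' hS (fun j => l j x))
    (f : ℝ → (Fin (n + 1) → ℂ) → ℂ)
    (hf : ∀ t z, f t z = ∑ j ∈ S, ((t ^ (-(v j)) : ℝ) : ℂ) * ∏ α, z α ^ (j α))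
    (pd : ℝ → Fin (n + 1) → (Fin (n + 1) → ℂ) → ℂ)
    (hpd : ∀ t α z, pd t α z = deriv (fun w => f t (Function.update z α w)) (z α))
    (i j₁ : Fin (n + 1) → ℤ) (hi : i ∈ S) (hj₁ : j₁ ∈ S) (hij : i ≠ j₁)
    (x : Fin (n + 1) → ℝ)
    (hface : l i x = l j₁ x ∧ ∀ k ∈ S, k ≠ i → k ≠ j₁ → l k x < l i x)
    (b : Fin (n + 1) → ℂ) (hb : ∀ α, b α ≠ 0)
    (hbsum : (∏ β, b β ^ (i β)) + (∏ β, b β ^ (j₁ β)) = 0)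
    (α : Fin (n + 1)) (hα : i α ≠ j₁ α)
    (zr : ℝ → Fin (n + 1) → ℂ)
    (hz : ∀ t β, zr t β = ((t ^ (x β) : ℝ) : ℂ) * b β) :
    Tendsto (fun t : ℝ => ((t ^ (-(F x)) : ℝ) : ℂ) * (zr t α * pd t α (zr t))) atTop
      (nhds (((j₁ α - i α : ℤ) : ℂ) * ∏ β, b β ^ (j₁ β))) ∧
    ((j₁ α - i α : ℤ) : ℂ) * (∏ β, b β ^ (j₁ β)) ≠ 0 :=
  face_log_derivative_limit_general n S hS v l hl F hF f hf pd hpd i j₁ hi hj₁ hij x hface b hb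
    hbsum α hα zr hz
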